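/- arXiv:2008.11705 — 4 statements merged into one kernel-verified Lean document; each statement's English description precedes it below -/
import Mathlib

section
/- Suppose routes are evaluated in nondecreasing order of shopping time, and θ is a route already inserted in the skyline whose shopping cost equals the global minimum shopping cost SC_min over all feasible routes. Then every route θ' evaluated after θ is conventionally dominated by θ or has the same cost vector dominated weakly; consequently no route evaluated after θ can be added to the linear skyline, and the algorithm may terminate. -/
/-- Early termination (Lemma 2): suppose `θ` is a feasible route already in the
skyline whose shopping cost equals the global minimum shopping cost over the
finite set `S` of feasible cost vectors (first coordinate SC, second ST), and
`θ'` is any route evaluated after `θ`, so that ST θ' ≥ ST θ.  Then `θ` weakly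
(componentwise) dominates `θ'`, hence `θ'` is at least as costly as `θ` under
every positive linear combination and can never be added to the linear
skyline. -/
theorem min_cost_route_terminates
    (S : Finset (ℝ × ℝ)) (θ θ' : ℝ × ℝ)
    (hθ : θ ∈ S) (hθ' : θ' ∈ S)
    (hmin : ∀ x ∈ S, θ.1 ≤ x.1)
    (hafter : θ.2 ≤ θ'.2) :
    θ.1 ≤ θ'.1 ∧ θ.2 ≤ θ'.2 ∧
      ∀ δ₁ δ₂ : ℝ, 0 < δ₁ → 0 < δ₂ →
        δ₁ * θ.1 + δ₂ * θ.2 ≤ δ₁ * θ'.1 + δ₂ * θ'.2 := by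
  have h1 := hmin θ' hθ'
  exact ⟨h1, hafter, fun δ₁ δ₂ h₁ h₂ => by nlinarith⟩
end

section
/- Let L = {p¹, ..., pᵏ} ⊆ ℝ² be a finite set of points sorted strictly increasing in the first coordinate and strictly decreasing in the second coordinate, such that consecutive triples are in convex position (each pⁱ lies strictly below the segment joining pⁱ⁻¹ and pⁱ⁺¹). Then for every δ ∈ ℝ²_{>0}, the minimizer of δ·p over all points of the conventional skyline containing L is attained at a point of L; i.e., L is optimal under all positive linear combinations. -/
/-!
Along a convex chain the slopes `sᵢ` of consecutive segments are negative and strictly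
increasing, so for every vertex `pᵢ` there is a slope `m < 0` with `sⱼ < m` before `pᵢ` and
`m < sⱼ` after it. The functional `(-m, 1)` then decreases along the chain up to `pᵢ` and
increases afterwards, so `pᵢ` minimizes it. For a fixed positive functional, a
chain point minimizing it over the chain also beats every point of `S`: a point dominated by
a chain point has a larger value, and a point above a chord has a value at least the
corresponding convex combination of the values at the chord's endpoints.
-/

open Set

def weightedSum (δ₁ δ₂ : ℝ) (q : ℝ × ℝ) : ℝ := δ₁ * q.1 + δ₂ * q.2

noncomputable def chainSlope (p : ℕ → ℝ × ℝ) (j : ℕ) : ℝ :=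
  ((p (j + 1)).2 - (p j).2) / ((p (j + 1)).1 - (p j).1)

lemma exists_neg_between_strictMonoOn {s : ℕ → ℝ} {n : ℕ} (hs : StrictMonoOn s (Iio n))
    (hneg : ∀ j < n, s j < 0) {i : ℕ} (hi : i ≤ n) :
    ∃ m < 0, (∀ j < i, s j < m) ∧ ∀ j ∈ Ico i n, m < s j := by
  obtain ⟨u, hu0, hlt, hle⟩ : ∃ u ≤ (0 : ℝ), (∀ j < i, s j < u) ∧ ∀ j ∈ Ico i n, u ≤ s j := by
    rcases hi.lt_or_eq with hin | rfl
    · refine ⟨s i, (hneg i hin).le, fun j hj => hs (hj.trans hin) hin hj, fun j hj => ?_⟩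
      exact hs.monotoneOn hin hj.2 hj.1
    · exact ⟨0, le_rfl, hneg, fun j hj => absurd hj.2 (not_lt.2 hj.1)⟩
  cases i with
  | zero => exact ⟨u - 1, by linarith, fun j hj => absurd hj j.not_lt_zero,
      fun j hj => by linarith [hle j hj]⟩
  | succ i =>
    have hsi := hlt i i.lt_succ_self
    refine ⟨(s i + u) / 2, by linarith, fun j hj => ?_, fun j hj => by linarith [hle j hj]⟩
    have hsj : s j ≤ s i :=
      hs.monotoneOn (mem_Iio.2 (by omega)) (mem_Iio.2 (by omega)) (Nat.lt_succ_iff.1 hj)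
    linarith

section Chain

variable {p : ℕ → ℝ × ℝ}

lemma chainSlope_neg {j : ℕ} (hfst : (p j).1 < (p (j + 1)).1)
    (hsnd : (p (j + 1)).2 < (p j).2) : chainSlope p j < 0 :=
  div_neg_of_neg_of_pos (sub_neg.2 hsnd) (sub_pos.2 hfst)

lemma chainSlope_lt_chainSlope_succ {j : ℕ} (h₀₁ : (p j).1 < (p (j + 1)).1)
    (h₁₂ : (p (j + 1)).1 < (p (j + 2)).1)
    (hconv : (p (j + 1)).2 < (p j).2 + ((p (j + 2)).2 - (p j).2) *
      ((p (j + 1)).1 - (p j).1) / ((p (j + 2)).1 - (p j).1)) :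
    chainSlope p j < chainSlope p (j + 1) := by
  have hchord := (lt_div_iff₀ (by linarith : 0 < (p (j + 2)).1 - (p j).1)).1
    (sub_lt_iff_lt_add'.2 hconv)
  rw [chainSlope, chainSlope, div_lt_div_iff₀ (sub_pos.2 h₀₁) (sub_pos.2 h₁₂)]
  linarith

lemma chainSlope_strictMonoOn {k : ℕ} (hfst : ∀ i, i + 1 < k → (p i).1 < (p (i + 1)).1)
    (hconv : ∀ i, i + 2 < k →
      (p (i + 1)).2 < (p i).2 + ((p (i + 2)).2 - (p i).2) *
        ((p (i + 1)).1 - (p i).1) / ((p (i + 2)).1 - (p i).1)) :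
    StrictMonoOn (chainSlope p) (Iio (k - 1)) :=
  strictMonoOn_of_lt_add_one ordConnected_Iio fun j _ _ hj => by
    rw [mem_Iio] at hj
    exact chainSlope_lt_chainSlope_succ (hfst j (by omega)) (hfst (j + 1) (by omega))
      (hconv j (by omega))

lemma weightedSum_succ_sub (m : ℝ) {l : ℕ} (hfst : (p l).1 < (p (l + 1)).1) :
    weightedSum (-m) 1 (p (l + 1)) - weightedSum (-m) 1 (p l) =
      (chainSlope p l - m) * ((p (l + 1)).1 - (p l).1) := by
  have hdx : (p (l + 1)).1 - (p l).1 ≠ 0 := (sub_pos.2 hfst).ne'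
  rw [weightedSum, weightedSum, chainSlope, sub_mul, div_mul_cancel₀ _ hdx]
  ring

lemma exists_pos_weights_chain_min_at {k i : ℕ} (hi : i < k)
    (hfst : ∀ i, i + 1 < k → (p i).1 < (p (i + 1)).1)
    (hsnd : ∀ i, i + 1 < k → (p (i + 1)).2 < (p i).2)
    (hconv : ∀ i, i + 2 < k →
      (p (i + 1)).2 < (p i).2 + ((p (i + 2)).2 - (p i).2) *
        ((p (i + 1)).1 - (p i).1) / ((p (i + 2)).1 - (p i).1)) :
    ∃ δ₁ δ₂ : ℝ, 0 < δ₁ ∧ 0 < δ₂ ∧ ∀ j < k, weightedSum δ₁ δ₂ (p i) ≤ weightedSum δ₁ δ₂ (p j) := by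
  obtain ⟨m, hm0, hbefore, hafter⟩ := exists_neg_between_strictMonoOn
    (chainSlope_strictMonoOn hfst hconv)
    (fun j hj => chainSlope_neg (hfst j (by omega)) (hsnd j (by omega))) (by omega : i ≤ k - 1)
  refine ⟨-m, 1, neg_pos.2 hm0, one_pos, fun j hj => ?_⟩
  have hanti : AntitoneOn (fun l => weightedSum (-m) 1 (p l)) (Iic i) :=
    antitoneOn_of_add_one_le ordConnected_Iic fun l _ _ hl => by
      have hx := hfst l (by rw [mem_Iic] at hl; omega)
      have hdec := mul_neg_of_neg_of_pos (sub_neg.2 (hbefore l (mem_Iic.1 hl))) (sub_pos.2 hx)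
      rw [← weightedSum_succ_sub m hx] at hdec
      exact (sub_neg.1 hdec).le
  have hmono : MonotoneOn (fun l => weightedSum (-m) 1 (p l)) (Ico i k) :=
    monotoneOn_of_le_add_one ordConnected_Ico fun l _ hl hl' => by
      have hx := hfst l hl'.2
      have hinc := mul_pos (sub_pos.2 (hafter l ⟨hl.1, by have := hl'.2; omega⟩)) (sub_pos.2 hx)
      rw [← weightedSum_succ_sub m hx] at hinc
      exact (sub_pos.1 hinc).le
  rcases le_total j i with hji | hij
  · exact hanti hji (mem_Iic.2 le_rfl) hji
  · exact hmono ⟨le_rfl, hi⟩ ⟨hij, hj⟩ hij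

end Chain

lemma weightedSum_le_weightedSum {δ₁ δ₂ : ℝ} (hδ₁ : 0 ≤ δ₁) (hδ₂ : 0 ≤ δ₂) {a q : ℝ × ℝ}
    (h₁ : a.1 ≤ q.1) (h₂ : a.2 ≤ q.2) : weightedSum δ₁ δ₂ a ≤ weightedSum δ₁ δ₂ q :=
  add_le_add (mul_le_mul_of_nonneg_left h₁ hδ₁) (mul_le_mul_of_nonneg_left h₂ hδ₂)

lemma le_weightedSum_of_above_chord {δ₁ δ₂ c : ℝ} (hδ₂ : 0 ≤ δ₂) {a b q : ℝ × ℝ}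
    (hab : a.1 < b.1) (haq : a.1 ≤ q.1) (hqb : q.1 ≤ b.1)
    (habove : a.2 + (b.2 - a.2) * (q.1 - a.1) / (b.1 - a.1) ≤ q.2)
    (ha : c ≤ weightedSum δ₁ δ₂ a) (hb : c ≤ weightedSum δ₁ δ₂ b) :
    c ≤ weightedSum δ₁ δ₂ q := by
  have hd : 0 < b.1 - a.1 := sub_pos.2 hab
  set t := (q.1 - a.1) / (b.1 - a.1) with ht
  have ht₀ : 0 ≤ t := div_nonneg (sub_nonneg.2 haq) hd.le
  have ht₁ : t ≤ 1 := (div_le_one hd).2 (by linarith)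
  have hq₁ : q.1 = a.1 + t * (b.1 - a.1) := by rw [ht, div_mul_cancel₀ _ hd.ne']; ring
  rw [mul_div_assoc, ← ht] at habove
  calc c = (1 - t) * c + t * c := by ring
    _ ≤ (1 - t) * weightedSum δ₁ δ₂ a + t * weightedSum δ₁ δ₂ b := by gcongr
    _ = δ₁ * q.1 + δ₂ * (a.2 + (b.2 - a.2) * t) := by rw [hq₁, weightedSum, weightedSum]; ring
    _ ≤ weightedSum δ₁ δ₂ q := by rw [weightedSum]; gcongr

theorem convex_chain_linearly_optimal_general
    (k : ℕ) (hk : 1 ≤ k) (p : ℕ → ℝ × ℝ)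
    (hfst : ∀ i, i + 1 < k → (p i).1 < (p (i + 1)).1)
    (hsnd : ∀ i, i + 1 < k → (p (i + 1)).2 < (p i).2)
    (hconv : ∀ i, i + 2 < k →
      (p (i + 1)).2 < (p i).2 + ((p (i + 2)).2 - (p i).2) *
        ((p (i + 1)).1 - (p i).1) / ((p (i + 2)).1 - (p i).1))
    (S : Finset (ℝ × ℝ))
    (hcover : ∀ q ∈ S, (∀ i < k, q ≠ p i) →
      (∃ i < k, (p i).1 ≤ q.1 ∧ (p i).2 ≤ q.2) ∨
      (∃ i < k, ∃ j < k, (p i).1 ≤ q.1 ∧ q.1 ≤ (p j).1 ∧ (p i).1 < (p j).1 ∧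
        (p i).2 + ((p j).2 - (p i).2) * (q.1 - (p i).1) / ((p j).1 - (p i).1)
          ≤ q.2)) :
    (∀ i < k, ∃ δ₁ δ₂ : ℝ, 0 < δ₁ ∧ 0 < δ₂ ∧
        ∀ j < k, δ₁ * (p i).1 + δ₂ * (p i).2 ≤ δ₁ * (p j).1 + δ₂ * (p j).2) ∧
    (∀ δ₁ δ₂ : ℝ, 0 < δ₁ → 0 < δ₂ →
        ∃ i < k, ∀ q ∈ S,
          δ₁ * (p i).1 + δ₂ * (p i).2 ≤ δ₁ * q.1 + δ₂ * q.2) := by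
  refine ⟨fun i hi => exists_pos_weights_chain_min_at hi hfst hsnd hconv,
    fun δ₁ δ₂ hδ₁ hδ₂ => ?_⟩
  obtain ⟨i, hi, hmin⟩ := Finset.exists_min_image (Finset.range k)
    (fun j => weightedSum δ₁ δ₂ (p j)) ⟨0, Finset.mem_range.2 hk⟩
  have hmin' : ∀ j < k, weightedSum δ₁ δ₂ (p i) ≤ weightedSum δ₁ δ₂ (p j) :=
    fun j hj => hmin j (Finset.mem_range.2 hj)
  refine ⟨i, Finset.mem_range.1 hi, fun q hq => ?_⟩
  by_cases hqL : ∃ j < k, q = p j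
  · obtain ⟨j, hj, rfl⟩ := hqL
    exact hmin' j hj
  · rcases hcover q hq fun j hj h => hqL ⟨j, hj, h⟩ with
      ⟨a, ha, h₁, h₂⟩ | ⟨a, ha, b, hb, haq, hqb, hab, habove⟩
    · exact (hmin' a ha).trans (weightedSum_le_weightedSum hδ₁.le hδ₂.le h₁ h₂)
    · exact le_weightedSum_of_above_chord hδ₂.le hab haq hqb habove (hmin' a ha) (hmin' b hb)

/-- A convex chain `L = {p 0, …, p (k-1)}` (strictly increasing in the first
coordinate, strictly decreasing in the second, consecutive triples in strictly
convex position) is optimal under all positive linear combinations: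
(a) every point of `L` minimizes some positive linear combination over `L`, and
(b) for a conventional skyline `S` (an antichain) containing `L`, in which every
point outside `L` is weakly dominated by a chain point or lies on or above a
segment joining two chain points, the minimizer of `δ·x` over `S` is attained
at a point of `L`, for every strictly positive `δ`. -/
theorem convex_chain_linearly_optimal
    (k : ℕ) (hk : 1 ≤ k) (p : ℕ → ℝ × ℝ)
    (hfst : ∀ i, i + 1 < k → (p i).1 < (p (i + 1)).1)
    (hsnd : ∀ i, i + 1 < k → (p (i + 1)).2 < (p i).2)
    (hconv : ∀ i, i + 2 < k →
      (p (i + 1)).2 < (p i).2 + ((p (i + 2)).2 - (p i).2) *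
        ((p (i + 1)).1 - (p i).1) / ((p (i + 2)).1 - (p i).1))
    (S : Finset (ℝ × ℝ))
    (hL : ∀ i < k, p i ∈ S)
    (hanti : ∀ q ∈ S, ∀ q' ∈ S, q ≠ q' →
      ¬((q.1 ≤ q'.1 ∧ q.2 ≤ q'.2)))
    (hcover : ∀ q ∈ S, (∀ i < k, q ≠ p i) →
      (∃ i < k, (p i).1 ≤ q.1 ∧ (p i).2 ≤ q.2) ∨
      (∃ i < k, ∃ j < k, (p i).1 ≤ q.1 ∧ q.1 ≤ (p j).1 ∧ (p i).1 < (p j).1 ∧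
        (p i).2 + ((p j).2 - (p i).2) * (q.1 - (p i).1) / ((p j).1 - (p i).1)
          ≤ q.2)) :
    (∀ i < k, ∃ δ₁ δ₂ : ℝ, 0 < δ₁ ∧ 0 < δ₂ ∧
        ∀ j < k, δ₁ * (p i).1 + δ₂ * (p i).2 ≤ δ₁ * (p j).1 + δ₂ * (p j).2) ∧
    (∀ δ₁ δ₂ : ℝ, 0 < δ₁ → 0 < δ₂ →
        ∃ i < k, ∀ q ∈ S,
          δ₁ * (p i).1 + δ₂ * (p i).2 ≤ δ₁ * q.1 + δ₂ * q.2) :=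
  convex_chain_linearly_optimal_general k hk p hfst hsnd hconv S hcover
end

section
/- In the route generation scheme where each route θ = ⟨τ_{k₁}, ..., τ_{k_n}⟩ generates (i) θˢ = θ with the store yielding the minimum detour appended, and (ii) θᵖ = θ with its last store replaced by the store yielding the next-larger ((k_n + 1)-th) minimum detour, every finite sequence of distinct stores is eventually generated starting from the singleton route containing the store of minimum detour. -/
/-- Routes are modeled as the lists of detour ranks of their stores: the route
`⟨τ_{k₁}, …, τ_{k_n}⟩` is recorded as the list `[k₁, …, k_n]` of (positive)
ranks in the detour order.  Generation starts from the singleton route of rank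
`1` and is closed under (i) appending the minimum-detour (rank `1`) store and
(ii) replacing the last store by the one of next-larger rank. -/
inductive GeneratedRoute : List ℕ → Prop
  | init : GeneratedRoute [1]
  | append (l : List ℕ) : GeneratedRoute l → GeneratedRoute (l ++ [1])
  | nextRank (l : List ℕ) (k : ℕ) :
      GeneratedRoute (l ++ [k]) → GeneratedRoute (l ++ [k + 1])

lemma gen_bump (l : List ℕ) (m : ℕ) (h : GeneratedRoute (l ++ [1])) :
    GeneratedRoute (l ++ [1 + m]) := by
  induction m with
  | zero => simpa using h
  | succ n ihn => simpa [← Nat.add_assoc] using GeneratedRoute.nextRank l (1 + n) ihn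

/-- Every nonempty finite sequence of (positive-rank) stores is eventually
generated by the scheme starting from the singleton minimum-detour route. -/
theorem all_routes_generated (l : List ℕ) (hne : l ≠ [])
    (hpos : ∀ k ∈ l, 1 ≤ k) :
    GeneratedRoute l := by
  induction l using List.reverseRecOn with
  | nil => exact absurd rfl hne
  | append_singleton l k ih =>
    have hk : 1 ≤ k := hpos k (by simp)
    have h1 : GeneratedRoute (l ++ [1]) := by
      cases l with
      | nil => exact GeneratedRoute.init
      | cons a t =>
        exact GeneratedRoute.append _ (ih (by simp) fun x hx => hpos x (List.mem_append.2 (Or.inl hx)))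
    obtain ⟨m, rfl⟩ := Nat.exists_eq_add_of_le hk
    exact gen_bump l m h1
end

section
/- Maintaining a linear skyline by the following insertion procedure preserves convexity: given an ordered list p¹, ..., pᴷ with strictly increasing first coordinates, strictly decreasing second coordinates, and consecutive triples in strictly convex position, inserting a new point q with q₁ > p^K₁ and q₂ < p^K₂, and then repeatedly removing p^K while {p^{K-1}, q} linearly dominates p^K (p^K lies on or above the segment from p^{K-1} to q), yields again a list with strictly increasing first coordinates, strictly decreasing second coordinates, and consecutive triples in strictly convex position. -/
/-- A "good" linear-skyline list: strictly increasing first coordinates,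
strictly decreasing second coordinates, and every three consecutive points in
strictly convex position. -/
def GoodChain (l : List (ℝ × ℝ)) : Prop :=
  l.Chain' (fun a b => a.1 < b.1 ∧ b.2 < a.2) ∧
  ∀ a b c : ℝ × ℝ, [a, b, c] <:+: l →
    b.2 < a.2 + (c.2 - a.2) * (b.1 - a.1) / (c.1 - a.1)

/-- The removal loop of the insertion procedure, acting on the reversed list:
while the current last point `a` (head of the reversed list) lies on or above
the segment from its predecessor `b` to the new point `q` (i.e., `{b, q}`
linearly dominates `a`), remove it. -/
noncomputable def trimRev (q : ℝ × ℝ) : List (ℝ × ℝ) → List (ℝ × ℝ)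
  | [] => []
  | [a] => [a]
  | a :: b :: rest =>
      if b.2 + (q.2 - b.2) * (a.1 - b.1) / (q.1 - b.1) ≤ a.2 then
        trimRev q (b :: rest)
      else a :: b :: rest

/-! The loop only ever deletes the current last point, so what survives is an initial segment of
the chain and stays good. The point `q` continues the monotone staircase because it lies to the
right of and below every point of the original chain, and the one new triple `(b, a, q)` is
strictly convex exactly because the loop stopped: `a` lies strictly below the segment `bq`. -/

lemma GoodChain.infix {l m : List (ℝ × ℝ)} (h : GoodChain l) (hm : m <:+: l) :
    GoodChain m :=
  ⟨h.1.infix hm, fun a b c habc => h.2 a b c (habc.trans hm)⟩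

lemma goodChain_pair_iff {a b : ℝ × ℝ} : GoodChain [a, b] ↔ a.1 < b.1 ∧ b.2 < a.2 := by
  have no_triple (x y z : ℝ × ℝ) : ¬[x, y, z] <:+: [a, b] := fun h => by simpa using h.length_le
  simp only [GoodChain, no_triple, IsEmpty.forall_iff, implies_true, and_true]
  exact List.isChain_pair

lemma GoodChain.append_of_lt_chord {m : List (ℝ × ℝ)} {b a q : ℝ × ℝ}
    (h : GoodChain (m ++ [b, a])) (h₁ : a.1 < q.1) (h₂ : q.2 < a.2)
    (hchord : a.2 < b.2 + (q.2 - b.2) * (a.1 - b.1) / (q.1 - b.1)) :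
    GoodChain (m ++ [b, a, q]) := by
  have hsplit : m ++ [b, a, q] = (m ++ [b, a]) ++ [q] := by simp
  rw [hsplit]
  refine ⟨h.1.append (List.isChain_singleton q) (by simp [h₁, h₂]), fun x y z hxyz => ?_⟩
  rcases List.infix_concat_iff.mp hxyz with hsuf | hinf
  · obtain ⟨t, ht, hts⟩ := List.suffix_concat_iff.mp hsuf |>.resolve_left (by simp)
    obtain ⟨rfl, hqz⟩ : t = [x, y] ∧ [q] = [z] :=
      List.append_inj' (ht.symm.trans (rfl : [x, y, z] = [x, y] ++ [z])) rfl
    obtain ⟨rfl, rfl⟩ : x = b ∧ y = a := by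
      simpa using (List.suffix_of_suffix_length_le hts (List.suffix_append m [b, a])
        (by simp)).eq_of_length rfl
    obtain rfl : q = z := by simpa using hqz
    exact hchord
  · exact h.2 x y z hinf

theorem goodChain_trimRev_reverse_append (q : ℝ × ℝ) (a : ℝ × ℝ) (r : List (ℝ × ℝ))
    (hg : GoodChain (a :: r).reverse) (h₁ : a.1 < q.1) (h₂ : q.2 < a.2) :
    GoodChain ((trimRev q (a :: r)).reverse ++ [q]) := by
  induction r generalizing a with
  | nil => simpa [trimRev] using goodChain_pair_iff.mpr ⟨h₁, h₂⟩
  | cons b rest ih =>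
    have hrev : (a :: b :: rest).reverse = rest.reverse ++ [b, a] := by simp
    rw [hrev] at hg
    obtain ⟨hba₁, hba₂⟩ := goodChain_pair_iff.mp (hg.infix (List.suffix_append _ _).isInfix)
    rw [trimRev]
    split_ifs with hdom
    · exact ih b (hg.infix ⟨[], [a], by simp⟩) (hba₁.trans h₁) (h₂.trans hba₂)
    · simpa using hg.append_of_lt_chord h₁ h₂ (not_le.mp hdom)

/-- Inserting a new point `q` beyond the end of a good chain and repeatedly
removing the last point while it is linearly dominated by its predecessor
together with `q` yields again a good chain. -/
theorem insertion_preserves_convexity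
    (l : List (ℝ × ℝ)) (hne : l ≠ []) (hgood : GoodChain l)
    (q : ℝ × ℝ)
    (hq1 : (l.getLast hne).1 < q.1)
    (hq2 : q.2 < (l.getLast hne).2) :
    GoodChain ((trimRev q l.reverse).reverse ++ [q]) := by
  obtain ⟨init, a, rfl⟩ := List.eq_nil_or_concat' l |>.resolve_left hne
  simp only [List.getLast_append_singleton] at hq1 hq2
  simpa using goodChain_trimRev_reverse_append q a init.reverse (by simpa using hgood) hq1 hq2
end
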